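/- Let H₀ and K be complex Hilbert spaces and set H = H₀ ⊕₂ K. Let R ∈ B(H) be such that R(x, 0) ∈ H₀ × {0} for every x ∈ H₀ (upper triangular with respect to the decomposition), and let V ∈ B(K) be the compression V k = P_K(R(0, k)), where P_K is the orthogonal projection of H onto the second summand. Let S ∈ B(H) satisfy S ∘ R = R ∘ S, S(x, 0) = 0 for all x ∈ H₀, and assume the map k ↦ P_K(S(0, k)) is an isometry of K. Define X : K → H by X k = S(0, k), and let M be the closure of the range of X. Then: (i) ‖X k‖ ≥ ‖k‖ for all k ∈ K; (ii) R(X k) = X(V k) for all k ∈ K; (iii) M is a closed subspace of H invariant under R; and (iv) X induces a continuous linear equivalence X̃ : K → M with R(X̃ k) = X̃(V k) for all k ∈ K, so that the restriction R|_M is similar to V. -/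

import Mathlib

/-!
Since `S` kills `H₀ ⊕ 0`, `S u = S (0, u₂)` for every `u`; applied to `u = R (0, k)` and combined
with `S R = R S` this gives `R X = X V`. The second component of `X k` has norm `‖k‖`, so `X` is
bounded below. A bounded-below operator on a complete space has closed range and is a
topological isomorphism onto it, so `M = range X` is `R`-invariant and `X : K ≃ M` realizes the
similarity.
-/

open NNReal

namespace WithLp

variable {p : ENNReal} {E F G 𝓕 : Type*} [AddCommGroup E] [AddCommGroup F] [AddCommGroup G]
  [FunLike 𝓕 (WithLp p (E × F)) G] [AddMonoidHomClass 𝓕 (WithLp p (E × F)) G]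

theorem map_eq_map_toLp_zero_snd {S : 𝓕} (hS : ∀ x : E, S (toLp p (x, 0)) = 0)
    (u : WithLp p (E × F)) : S u = S (toLp p (0, u.ofLp.2)) := calc
  S u = S (toLp p (u.ofLp.1, 0) + toLp p (0, u.ofLp.2)) := by
    congr 1
    apply ofLp_injective
    ext <;> simp
  _ = S (toLp p (0, u.ofLp.2)) := by rw [map_add, hS, zero_add]

end WithLp

namespace ContinuousLinearMap

variable {𝕜 E F : Type*} [NontriviallyNormedField 𝕜] [NormedAddCommGroup E] [NormedSpace 𝕜 E]
  [NormedAddCommGroup F] [NormedSpace 𝕜 F]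

noncomputable def equivRangeOfAntilipschitz (f : E →L[𝕜] F) {c : ℝ≥0}
    (hf : AntilipschitzWith c f) : E ≃L[𝕜] f.range :=
  (LinearEquiv.ofInjective (f : E →ₗ[𝕜] F) hf.injective).toContinuousLinearEquivOfBounds
    ‖f‖ c f.le_opNorm fun y => by
      obtain ⟨x, rfl⟩ := (LinearEquiv.ofInjective (f : E →ₗ[𝕜] F) hf.injective).surjective y
      simpa using f.bound_of_antilipschitz hf x

@[simp]
theorem coe_equivRangeOfAntilipschitz_apply (f : E →L[𝕜] F) {c : ℝ≥0}
    (hf : AntilipschitzWith c f) (x : E) : (f.equivRangeOfAntilipschitz hf x : F) = f x :=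
  rfl

end ContinuousLinearMap

theorem restriction_similar_to_compression
    {H₀ K : Type}
    [NormedAddCommGroup H₀] [InnerProductSpace ℂ H₀]
    [NormedAddCommGroup K] [InnerProductSpace ℂ K] [CompleteSpace K]
    (R : WithLp 2 (H₀ × K) →L[ℂ] WithLp 2 (H₀ × K))
    (V : K →L[ℂ] K)
    (hV : ∀ k : K,
      V k = (WithLp.equiv 2 (H₀ × K) (R ((WithLp.equiv 2 (H₀ × K)).symm (0, k)))).2)
    (S : WithLp 2 (H₀ × K) →L[ℂ] WithLp 2 (H₀ × K))
    (hSR : S.comp R = R.comp S)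
    (hS0 : ∀ x : H₀, S ((WithLp.equiv 2 (H₀ × K)).symm (x, 0)) = 0)
    (hSiso : ∀ k : K,
      ‖(WithLp.equiv 2 (H₀ × K) (S ((WithLp.equiv 2 (H₀ × K)).symm (0, k)))).2‖ = ‖k‖)
    (X : K →L[ℂ] WithLp 2 (H₀ × K))
    (hX : ∀ k : K, X k = S ((WithLp.equiv 2 (H₀ × K)).symm (0, k)))
    (M : Submodule ℂ (WithLp 2 (H₀ × K)))
    (hM : M = (LinearMap.range (X : K →ₗ[ℂ] WithLp 2 (H₀ × K))).topologicalClosure) :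
    (∀ k : K, ‖k‖ ≤ ‖X k‖) ∧
    (∀ k : K, R (X k) = X (V k)) ∧
    (IsClosed (M : Set (WithLp 2 (H₀ × K))) ∧ ∀ u ∈ M, R u ∈ M) ∧
    (∃ Xt : K ≃L[ℂ] M,
      (∀ k : K, (Xt k : WithLp 2 (H₀ × K)) = X k) ∧
      ∀ k : K, R (Xt k : WithLp 2 (H₀ × K)) = (Xt (V k) : WithLp 2 (H₀ × K))) := by
  simp only [WithLp.equiv_symm_apply, WithLp.equiv_apply] at hV hS0 hSiso hX
  have hlow (k : K) : ‖k‖ ≤ ‖X k‖ := by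
    rw [hX, ← hSiso]
    exact WithLp.norm_snd_le H₀ _
  have hint (k : K) : R (X k) = X (V k) := by
    rw [hX, hX, hV, ← WithLp.map_eq_map_toLp_zero_snd hS0, ← ContinuousLinearMap.comp_apply,
      ← hSR, ContinuousLinearMap.comp_apply]
  have hanti : AntilipschitzWith 1 X := X.antilipschitz_of_bound fun k => by simpa using hlow k
  obtain rfl : M = X.range := hM.trans (X.closed_range_of_antilipschitz hanti)
  refine ⟨hlow, hint, ⟨hanti.isClosed_range X.uniformContinuous, ?_⟩,
    X.equivRangeOfAntilipschitz hanti, X.coe_equivRangeOfAntilipschitz_apply hanti, hint⟩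
  rintro _ ⟨k, rfl⟩
  exact ⟨V k, (hint k).symm⟩
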